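/- arXiv:2102.06737 — 6 statements merged into one kernel-verified Lean document; each statement's English description precedes it below -/
import Mathlib

section
/- Let s, y ∈ ℝⁿ with y ≠ 0 and let μ₁ ∈ (0,1), μ₂ > 0. Define θ₁ = 1 if sᵀy ≥ μ₁ yᵀy/μ₂, and θ₁ = ((1-μ₁) yᵀy/μ₂)/(yᵀy/μ₂ - sᵀy) otherwise. Set s̃ = θ₁ s + (1-θ₁) y/μ₂. Then s̃ᵀ y ≥ (μ₁/μ₂) yᵀy ≥ 0. -/
/-!
Write `a = sᵀy` and `q = yᵀHy = yᵀy/μ₂`. Then `s̃ᵀy = θ₁ a + (1 - θ₁) q`. If `a ≥ μ₁ q`, `θ₁ = 1` and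
there is nothing to do. Otherwise `a < μ₁ q ≤ q`, so `θ₁ = (1 - μ₁) q / (q - a)` is well defined and
`θ₁ a + (1 - θ₁) q = q - θ₁ (q - a) = μ₁ q` exactly.
-/

open Matrix

section PowellDamping

variable {K : Type*} [Field K] [LinearOrder K] [IsStrictOrderedRing K]

/-- Powell's damping factor, with `a = sᵀy` and `q = yᵀHy`. -/
def powellFactor (μ a q : K) : K :=
  if μ * q ≤ a then 1 else (1 - μ) * q / (q - a)

variable {μ a q : K}

theorem powellFactor_combination_eq_of_lt (hμ : μ ≤ 1) (hq : 0 ≤ q) (h : a < μ * q) :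
    powellFactor μ a q * a + (1 - powellFactor μ a q) * q = μ * q := by
  have hμq : μ * q ≤ q := mul_le_of_le_one_left hq hμ
  have hgap : q - a ≠ 0 := by linarith
  rw [powellFactor, if_neg h.not_ge]
  field_simp
  ring

theorem le_powellFactor_combination (hμ : μ ≤ 1) (hq : 0 ≤ q) :
    μ * q ≤ powellFactor μ a q * a + (1 - powellFactor μ a q) * q := by
  by_cases h : μ * q ≤ a
  · simp [powellFactor, h]
  · exact (powellFactor_combination_eq_of_lt hμ hq (not_le.mp h)).ge

end PowellDamping

theorem powell_damping_lower_bound_general {n : ℕ} (s y : Fin n → ℝ)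
    (μ₁ μ₂ : ℝ) (hμ₁ : 0 < μ₁) (hμ₁' : μ₁ < 1) (hμ₂ : 0 < μ₂)
    (θ₁ : ℝ)
    (hθ : θ₁ = if (μ₁/μ₂) * (y ⬝ᵥ y) ≤ s ⬝ᵥ y then 1
      else ((1 - μ₁) * (y ⬝ᵥ y) / μ₂) / ((y ⬝ᵥ y) / μ₂ - s ⬝ᵥ y))
    (st : Fin n → ℝ)
    (hst : st = θ₁ • s + (1 - θ₁) • μ₂⁻¹ • y) :
    (μ₁ / μ₂) * (y ⬝ᵥ y) ≤ st ⬝ᵥ y ∧ 0 ≤ (μ₁ / μ₂) * (y ⬝ᵥ y) := by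
  have hyy : 0 ≤ y ⬝ᵥ y := Finset.sum_nonneg fun i _ => mul_self_nonneg (y i)
  have hq : 0 ≤ y ⬝ᵥ y / μ₂ := div_nonneg hyy hμ₂.le
  have hθ' : θ₁ = powellFactor μ₁ (s ⬝ᵥ y) (y ⬝ᵥ y / μ₂) := by
    rw [hθ, powellFactor, mul_div_assoc, div_mul_eq_mul_div, mul_div_assoc]
  have hsty : st ⬝ᵥ y = θ₁ * (s ⬝ᵥ y) + (1 - θ₁) * (y ⬝ᵥ y / μ₂) := by
    simp [hst, add_dotProduct, smul_dotProduct, inv_mul_eq_div]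
  refine ⟨?_, by positivity⟩
  rw [hsty, hθ', div_mul_eq_mul_div, mul_div_assoc]
  exact le_powellFactor_combination hμ₁'.le hq

/-- Powell's damping step of D_{P(I)}D_{LM} with H = μ₂⁻¹ I:
the damped vector s̃ satisfies s̃ᵀy ≥ (μ₁/μ₂) yᵀy ≥ 0. -/
theorem powell_damping_lower_bound {n : ℕ} (s y : Fin n → ℝ) (hy : y ≠ 0)
    (μ₁ μ₂ : ℝ) (hμ₁ : 0 < μ₁) (hμ₁' : μ₁ < 1) (hμ₂ : 0 < μ₂)
    (θ₁ : ℝ)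
    (hθ : θ₁ = if (μ₁/μ₂) * (y ⬝ᵥ y) ≤ s ⬝ᵥ y then 1
      else ((1 - μ₁) * (y ⬝ᵥ y) / μ₂) / ((y ⬝ᵥ y) / μ₂ - s ⬝ᵥ y))
    (st : Fin n → ℝ)
    (hst : st = θ₁ • s + (1 - θ₁) • μ₂⁻¹ • y) :
    (μ₁ / μ₂) * (y ⬝ᵥ y) ≤ st ⬝ᵥ y ∧ 0 ≤ (μ₁ / μ₂) * (y ⬝ᵥ y) :=
  powell_damping_lower_bound_general s y μ₁ μ₂ hμ₁ hμ₁' hμ₂ θ₁ hθ st hst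
end

section
/- Let s, y ∈ ℝⁿ with y ≠ 0, μ₁ ∈ (0,1), μ₂ > 0. Let (s̃, ỹ) be the output of D_{P(I)}D_{LM}: θ₁ = 1 if sᵀy ≥ (μ₁/μ₂) yᵀy and otherwise θ₁ = ((1-μ₁) yᵀy/μ₂)/(yᵀy/μ₂ - sᵀy); s̃ = θ₁ s + (1-θ₁) y/μ₂; ỹ = y + μ₂ s̃. Then s̃ᵀs̃/(s̃ᵀỹ) ≤ 1/μ₂ and ỹᵀỹ/(s̃ᵀỹ) ≤ 1/μ₃, where μ₃ = μ₁/(μ₂(1 + 2μ₁)). -/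
open Matrix

/-- Lemma 3: the output (s̃, ỹ) of D_{P(I)}D_{LM} satisfies
s̃ᵀs̃/(s̃ᵀỹ) ≤ 1/μ₂ and ỹᵀỹ/(s̃ᵀỹ) ≤ 1/μ₃ with μ₃ = μ₁/(μ₂(1+2μ₁)). -/
theorem double_damping_output_bounds {n : ℕ} (s y : Fin n → ℝ) (hy : y ≠ 0)
    (μ₁ μ₂ : ℝ) (hμ₁ : 0 < μ₁) (hμ₁' : μ₁ < 1) (hμ₂ : 0 < μ₂)
    (θ₁ : ℝ)
    (hθ : θ₁ = if (μ₁ / μ₂) * (y ⬝ᵥ y) ≤ s ⬝ᵥ y then 1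
      else ((1 - μ₁) * (y ⬝ᵥ y) / μ₂) / ((y ⬝ᵥ y) / μ₂ - s ⬝ᵥ y))
    (st yt : Fin n → ℝ)
    (hst : st = θ₁ • s + (1 - θ₁) • μ₂⁻¹ • y)
    (hyt : yt = y + μ₂ • st)
    (μ₃ : ℝ) (hμ₃ : μ₃ = μ₁ / (μ₂ * (1 + 2 * μ₁))) :
    (st ⬝ᵥ st) / (st ⬝ᵥ yt) ≤ 1 / μ₂ ∧ (yt ⬝ᵥ yt) / (st ⬝ᵥ yt) ≤ 1 / μ₃ := by
  set a := s ⬝ᵥ y with ha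
  set b := y ⬝ᵥ y with hb
  have hnn : ∀ v : Fin n → ℝ, 0 ≤ v ⬝ᵥ v := fun v =>
    Finset.sum_nonneg fun i _ => mul_self_nonneg (v i)
  have hb0 : 0 < b := by
    rcases lt_or_eq_of_le (hnn y) with h | h
    · exact h
    · exact absurd (dotProduct_self_eq_zero.mp h.symm) hy
  set p := st ⬝ᵥ st with hp
  have hp0 : 0 ≤ p := hnn st
  -- st ⬝ᵥ y
  have hq : st ⬝ᵥ y = θ₁ * a + (1 - θ₁) * μ₂⁻¹ * b := by
    rw [hst]
    simp [add_dotProduct, smul_dotProduct, smul_eq_mul, ha, hb, mul_assoc]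
  set q := st ⬝ᵥ y with hqdef
  -- key bound
  have hkey : μ₁ / μ₂ * b ≤ q := by
    rw [hq, hθ]
    split_ifs with h
    · simpa using h
    · push_neg at h
      have hd : 0 < b / μ₂ - a := by
        have h2 : μ₁ / μ₂ * b < b / μ₂ := by
          rw [div_mul_eq_mul_div, div_lt_div_iff₀ hμ₂ hμ₂]
          nlinarith [mul_pos hb0 hμ₂]
        linarith
      have hcanc : (1 - μ₁) * b / μ₂ / (b / μ₂ - a) * (b / μ₂ - a)
          = (1 - μ₁) * b / μ₂ := div_mul_cancel₀ _ (ne_of_gt hd)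
      apply le_of_eq
      linear_combination hcanc
  have hq0 : 0 < q := lt_of_lt_of_le (by positivity) hkey
  have hsy : st ⬝ᵥ yt = q + μ₂ * p := by
    rw [hyt]
    simp [dotProduct_add, dotProduct_smul, smul_eq_mul, hqdef, hp]
  have hyy : yt ⬝ᵥ yt = b + 2 * μ₂ * q + μ₂ ^ 2 * p := by
    rw [hyt]
    simp [dotProduct_add, add_dotProduct, dotProduct_smul,
      smul_dotProduct, smul_eq_mul, hb, hp]
    rw [dotProduct_comm y st]
    rw [← hqdef]
    ring
  have hD : 0 < q + μ₂ * p := by positivity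
  constructor
  · rw [hsy, div_le_div_iff₀ hD hμ₂]
    nlinarith
  · have hμ₃0 : 0 < μ₃ := by rw [hμ₃]; positivity
    rw [hsy, hyy, div_le_div_iff₀ hD hμ₃0, hμ₃]
    rw [← mul_div_assoc, div_le_iff₀ (by positivity)]
    have hbq : μ₁ * b ≤ μ₂ * q := by
      have := hkey
      rw [div_mul_eq_mul_div, div_le_iff₀ hμ₂] at this
      linarith
    nlinarith [mul_nonneg hμ₁.le hp0, mul_nonneg (mul_nonneg hμ₁.le hμ₂.le) hp0]
end

section
/- Let H ∈ ℝ^{n×n} be symmetric positive definite and let s, y ∈ ℝⁿ with sᵀy > 0, sᵀs/(sᵀy) ≤ 1/μ₂ and yᵀy/(sᵀy) ≤ 1/μ₃ for positive constants μ₂, μ₃. Define ρ = 1/(sᵀy) and the inverse-BFGS update H⁺ = (I − ρ s yᵀ) H (I − ρ y sᵀ) + ρ s sᵀ. Then ‖H⁺‖ ≤ (1 + 1/√(μ₂μ₃))² ‖H‖ + 1/μ₂, where ‖·‖ is the spectral norm. -/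
open Matrix
open scoped Matrix.Norms.L2Operator

/-! Submultiplicativity of the spectral norm reduces the bound to the norms of the three factors
`I - ρ s yᵀ`, `I - ρ y sᵀ` and `ρ s sᵀ`. A rank-one matrix `u vᵀ` is a column times a row, so its
spectral norm is at most `‖u‖ ‖v‖`; the curvature bounds give `ρ ‖s‖² ≤ 1/μ₂` and, multiplied
together, `(ρ ‖s‖ ‖y‖)² ≤ 1/(μ₂ μ₃)`. -/

theorem mul_div_le_one_div_sqrt_mul {a b d p q : ℝ} (ha : 0 ≤ a) (hb : 0 ≤ b) (hd : 0 ≤ d)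
    (hp : a ^ 2 / d ≤ 1 / p) (hq : b ^ 2 / d ≤ 1 / q) : a * b / d ≤ 1 / √(p * q) := by
  have hsq : (a * b / d) ^ 2 ≤ 1 / (p * q) :=
    calc (a * b / d) ^ 2 = (a ^ 2 / d) * (b ^ 2 / d) := by ring
      _ ≤ (1 / p) * (1 / q) :=
        mul_le_mul hp hq (by positivity) ((div_nonneg (sq_nonneg a) hd).trans hp)
      _ = 1 / (p * q) := one_div_mul_one_div p q
  calc a * b / d = √((a * b / d) ^ 2) := (Real.sqrt_sq (by positivity)).symm
    _ ≤ √(1 / (p * q)) := Real.sqrt_le_sqrt hsq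
    _ = 1 / √(p * q) := by rw [one_div, one_div, Real.sqrt_inv]

namespace Matrix

variable {𝕜 ι m n : Type*} [RCLike 𝕜] [Fintype m] [Fintype n] [DecidableEq n]

lemma l2_opNorm_one_le : ‖(1 : Matrix n n 𝕜)‖ ≤ 1 := by
  rw [← diagonal_one, l2_opNorm_diagonal]
  exact pi_norm_le_iff_of_nonneg zero_le_one |>.mpr fun _ ↦ norm_one.le

section Unique

variable [Unique ι] [DecidableEq ι]

lemma l2_opNorm_replicateCol (v : m → 𝕜) : ‖replicateCol ι v‖ = ‖WithLp.toLp 2 v‖ := by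
  have hgram : (replicateCol ι v)ᴴ * replicateCol ι v
      = diagonal fun _ ↦ (‖WithLp.toLp 2 v‖ : 𝕜) ^ 2 := by
    ext i j
    rw [Subsingleton.elim j i, diagonal_apply_eq, conjTranspose_replicateCol,
      replicateRow_mul_replicateCol_apply, ← inner_self_eq_norm_sq_to_K,
      EuclideanSpace.inner_toLp_toLp, dotProduct_comm]
  have h := l2_opNorm_conjTranspose_mul_self (replicateCol ι v)
  rw [hgram, l2_opNorm_diagonal, pi_norm_const, norm_pow, RCLike.norm_ofReal, abs_norm] at h
  exact (pow_left_inj₀ (norm_nonneg _) (norm_nonneg _) two_ne_zero).mp (by rw [h, sq])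

lemma l2_opNorm_replicateRow (v : n → 𝕜) : ‖replicateRow ι v‖ = ‖WithLp.toLp 2 v‖ := by
  rw [← l2_opNorm_conjTranspose, conjTranspose_replicateRow, l2_opNorm_replicateCol]
  simp [EuclideanSpace.norm_eq]

end Unique

lemma l2_opNorm_vecMulVec_le (v : m → 𝕜) (w : n → 𝕜) :
    ‖vecMulVec v w‖ ≤ ‖WithLp.toLp 2 v‖ * ‖WithLp.toLp 2 w‖ := by
  rw [vecMulVec_eq (Fin 1), ← l2_opNorm_replicateCol (ι := Fin 1),
    ← l2_opNorm_replicateRow (ι := Fin 1)]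
  exact l2_opNorm_mul _ _

lemma l2_opNorm_one_sub_smul_vecMulVec_le (c : 𝕜) (v w : n → 𝕜) :
    ‖1 - c • vecMulVec v w‖ ≤ 1 + ‖c‖ * (‖WithLp.toLp 2 v‖ * ‖WithLp.toLp 2 w‖) :=
  (norm_sub_le _ _).trans <| add_le_add l2_opNorm_one_le <|
    (norm_smul_le _ _).trans <| by gcongr; exact l2_opNorm_vecMulVec_le v w

end Matrix

theorem bfgs_H_update_norm_bound_general {n : ℕ} (H : Matrix (Fin n) (Fin n) ℝ)
    (s y : Fin n → ℝ) (hsy : 0 < s ⬝ᵥ y)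
    (μ₂ μ₃ : ℝ)
    (hss : (s ⬝ᵥ s) / (s ⬝ᵥ y) ≤ 1 / μ₂) (hyy : (y ⬝ᵥ y) / (s ⬝ᵥ y) ≤ 1 / μ₃)
    (ρ : ℝ) (hρ : ρ = (s ⬝ᵥ y)⁻¹)
    (Hp : Matrix (Fin n) (Fin n) ℝ)
    (hHp : Hp = (1 - ρ • vecMulVec s y) * H * (1 - ρ • vecMulVec y s)
      + ρ • vecMulVec s s) :
    ‖Hp‖ ≤ (1 + 1 / Real.sqrt (μ₂ * μ₃)) ^ 2 * ‖H‖ + 1 / μ₂ := by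
  set κ := 1 / Real.sqrt (μ₂ * μ₃)
  have hρ0 : 0 ≤ ρ := hρ ▸ inv_nonneg.mpr hsy.le
  have hnorm_sq (v : Fin n → ℝ) : ‖WithLp.toLp 2 v‖ ^ 2 = v ⬝ᵥ v := by
    rw [EuclideanSpace.real_norm_sq_eq]
    simp [dotProduct, sq]
  have hsy_norm : ρ * (‖WithLp.toLp 2 s‖ * ‖WithLp.toLp 2 y‖) ≤ κ := by
    rw [hρ, ← div_eq_inv_mul]
    exact mul_div_le_one_div_sqrt_mul (norm_nonneg _) (norm_nonneg _) hsy.le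
      (by rwa [hnorm_sq]) (by rwa [hnorm_sq])
  have hleft : ‖1 - ρ • vecMulVec s y‖ ≤ 1 + κ :=
    (l2_opNorm_one_sub_smul_vecMulVec_le ρ s y).trans (by rw [Real.norm_of_nonneg hρ0]; linarith)
  have hright : ‖1 - ρ • vecMulVec y s‖ ≤ 1 + κ :=
    (l2_opNorm_one_sub_smul_vecMulVec_le ρ y s).trans (by rw [Real.norm_of_nonneg hρ0, mul_comm ‖_‖]; linarith)
  have hrank_one : ‖ρ • vecMulVec s s‖ ≤ 1 / μ₂ :=
    calc ‖ρ • vecMulVec s s‖ ≤ ρ * (‖WithLp.toLp 2 s‖ * ‖WithLp.toLp 2 s‖) := by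
          grw [norm_smul, Real.norm_of_nonneg hρ0, l2_opNorm_vecMulVec_le]
      _ = (s ⬝ᵥ s) / (s ⬝ᵥ y) := by rw [← sq, hnorm_sq, hρ, div_eq_inv_mul]
      _ ≤ 1 / μ₂ := hss
  rw [hHp]
  calc _ ≤ ‖1 - ρ • vecMulVec s y‖ * ‖H‖ * ‖1 - ρ • vecMulVec y s‖ + ‖ρ • vecMulVec s s‖ :=
        norm_add_le_of_le (norm_mul₃_le ..) le_rfl
    _ ≤ (1 + κ) * ‖H‖ * (1 + κ) + 1 / μ₂ := by gcongr
    _ = (1 + κ) ^ 2 * ‖H‖ + 1 / μ₂ := by ring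

/-- Inverse-BFGS update norm bound: ‖H⁺‖ ≤ (1 + 1/√(μ₂μ₃))² ‖H‖ + 1/μ₂ (spectral norm). -/
theorem bfgs_H_update_norm_bound {n : ℕ} (H : Matrix (Fin n) (Fin n) ℝ)
    (hH : H.PosDef) (s y : Fin n → ℝ) (hsy : 0 < s ⬝ᵥ y)
    (μ₂ μ₃ : ℝ) (hμ₂ : 0 < μ₂) (hμ₃ : 0 < μ₃)
    (hss : (s ⬝ᵥ s) / (s ⬝ᵥ y) ≤ 1 / μ₂) (hyy : (y ⬝ᵥ y) / (s ⬝ᵥ y) ≤ 1 / μ₃)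
    (ρ : ℝ) (hρ : ρ = (s ⬝ᵥ y)⁻¹)
    (Hp : Matrix (Fin n) (Fin n) ℝ)
    (hHp : Hp = (1 - ρ • vecMulVec s y) * H * (1 - ρ • vecMulVec y s)
      + ρ • vecMulVec s s) :
    ‖Hp‖ ≤ (1 + 1 / Real.sqrt (μ₂ * μ₃)) ^ 2 * ‖H‖ + 1 / μ₂ :=
  bfgs_H_update_norm_bound_general H s y hsy μ₂ μ₃ hss hyy ρ hρ Hp hHp
end

section
/- Let H₀ = λ⁻¹ I with λ > 0, and let (sᵢ, yᵢ), i = 1, …, p, be vectors in ℝⁿ satisfying sᵢᵀyᵢ > 0, sᵢᵀsᵢ/(sᵢᵀyᵢ) ≤ 1/μ₂ and yᵢᵀyᵢ/(sᵢᵀyᵢ) ≤ 1/μ₃ for positive constants μ₂, μ₃. Define recursively Hᵢ = (I − ρᵢ sᵢ yᵢᵀ) Hᵢ₋₁ (I − ρᵢ yᵢ sᵢᵀ) + ρᵢ sᵢ sᵢᵀ with ρᵢ = 1/(sᵢᵀyᵢ). Then H_p is symmetric positive definite and (λ + p/μ₃)⁻¹ I ⪯ H_p ⪯ (λ⁻¹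 μ̂^p + ((μ̂^p − 1)/(μ̂ − 1)) (1/μ₂)) I, where μ̂ = (1 + 1/√(μ₂μ₃))². -/
open Matrix

/-!
Write `ρ = (sᵀy)⁻¹` and `H⁺` for the update of `H` by `(s, y)`. For every `x`, with
`z = x - ρ (sᵀx) y`, one has `xᵀ H⁺ x = zᵀ H z + ρ (sᵀx)²`, and everything follows from
Cauchy–Schwarz applied to this identity.

Lower bound: since `x = z + ρ (sᵀx) y` and `ρ ‖y‖² ≤ 1/μ₃`, Cauchy–Schwarz gives
`‖x‖² ≤ (1/c + 1/μ₃) (c ‖z‖² + ρ (sᵀx)²)`, so `H ⪰ c I` implies `H⁺ ⪰ (1/c + 1/μ₃)⁻¹ I`.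
This replaces the dual recursion `‖Bᵢ‖ ≤ ‖Bᵢ₋₁‖ + 1/μ₃` for `Bᵢ = Hᵢ⁻¹`, so no inverse
is ever formed; from `H₀ = λ⁻¹ I` it gives `H_p ⪰ (λ + p/μ₃)⁻¹ I`.

Upper bound: `‖z‖ ≤ (1 + ρ ‖s‖ ‖y‖) ‖x‖ ≤ (1 + 1/√(μ₂μ₃)) ‖x‖` and `ρ (sᵀx)² ≤ ‖x‖²/μ₂`,
so `H ⪯ C I` implies `H⁺ ⪯ (μ̂ C + 1/μ₂) I`. Unrolling this recursion gives a geometric sum.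
-/

namespace Matrix

section DotProduct

variable {ι R : Type*} [Fintype ι] [CommRing R] [LinearOrder R] [IsStrictOrderedRing R]

lemma dotProduct_self_nonneg (x : ι → R) : 0 ≤ x ⬝ᵥ x :=
  Finset.sum_nonneg fun _ _ => mul_self_nonneg _

lemma dotProduct_sq_le_dotProduct_self_mul_dotProduct_self (a b : ι → R) :
    (a ⬝ᵥ b) ^ 2 ≤ (a ⬝ᵥ a) * (b ⬝ᵥ b) := by
  simpa [dotProduct, sq] using Finset.sum_mul_sq_le_sq_mul_sq Finset.univ a b

end DotProduct

variable {ι : Type*} [Fintype ι]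

lemma dotProduct_self_add_smul_le {z y : ι → ℝ} {u σ d κ : ℝ} (hσ : 0 < σ) (hd : 0 < d)
    (hy : y ⬝ᵥ y ≤ κ * σ) :
    (z + u • y) ⬝ᵥ (z + u • y) ≤ (d + κ) * (d⁻¹ * (z ⬝ᵥ z) + σ * u ^ 2) := by
  have hexpand : (z + u • y) ⬝ᵥ (z + u • y)
      = z ⬝ᵥ z + 2 * u * (z ⬝ᵥ y) + u ^ 2 * (y ⬝ᵥ y) := by
    simp only [add_dotProduct, dotProduct_add, smul_dotProduct, dotProduct_smul, smul_eq_mul,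
      dotProduct_comm y z]
    ring
  have hcs := dotProduct_sq_le_dotProduct_self_mul_dotProduct_self z y
  have hz := dotProduct_self_nonneg z
  have hzy : (z ⬝ᵥ y) ^ 2 ≤ κ * σ * (z ⬝ᵥ z) := by nlinarith
  have hcross : 2 * d * u * (z ⬝ᵥ y) ≤ d ^ 2 * σ * u ^ 2 + κ * (z ⬝ᵥ z) := by
    refine le_of_mul_le_mul_left ?_ hσ
    nlinarith [sq_nonneg (d * σ * u - z ⬝ᵥ y)]
  have hyu := mul_le_mul_of_nonneg_left hy (by positivity : 0 ≤ d * u ^ 2)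
  have hfactor : (d + κ) * (d⁻¹ * (z ⬝ᵥ z) + σ * u ^ 2)
      = d⁻¹ * ((d + κ) * (z ⬝ᵥ z + d * σ * u ^ 2)) := by
    field_simp
  rw [hexpand, hfactor, le_inv_mul_iff₀ hd]
  nlinarith

lemma dotProduct_self_sub_smul_le {s y x : ι → ℝ} {a b : ℝ} (hsy : 0 < s ⬝ᵥ y)
    (hs : s ⬝ᵥ s ≤ a * (s ⬝ᵥ y)) (hy : y ⬝ᵥ y ≤ b * (s ⬝ᵥ y)) :
    (x - ((s ⬝ᵥ y)⁻¹ * (s ⬝ᵥ x)) • y) ⬝ᵥ (x - ((s ⬝ᵥ y)⁻¹ * (s ⬝ᵥ x)) • y)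
      ≤ (1 + √(a * b)) ^ 2 * (x ⬝ᵥ x) := by
  set σ := s ⬝ᵥ y
  set u := σ⁻¹ * (s ⬝ᵥ x)
  have hσu : σ * u = s ⬝ᵥ x := by simp only [u]; field_simp
  have hx := dotProduct_self_nonneg x
  have hsx := dotProduct_sq_le_dotProduct_self_mul_dotProduct_self s x
  have hyx := dotProduct_sq_le_dotProduct_self_mul_dotProduct_self y x
  have hs0 := dotProduct_self_nonneg s
  have hy0 := dotProduct_self_nonneg y
  have ha : 0 ≤ a := nonneg_of_mul_nonneg_left (hs0.trans hs) hsy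
  have hb : 0 ≤ b := nonneg_of_mul_nonneg_left (hy0.trans hy) hsy
  set k := √(a * b)
  have hk : k ^ 2 = a * b := Real.sq_sqrt (mul_nonneg ha hb)
  have hquad : u ^ 2 * (y ⬝ᵥ y) ≤ k ^ 2 * (x ⬝ᵥ x) := by
    refine le_of_mul_le_mul_left ?_ (by positivity : 0 < σ ^ 2)
    calc σ ^ 2 * (u ^ 2 * (y ⬝ᵥ y)) = (s ⬝ᵥ x) ^ 2 * (y ⬝ᵥ y) := by rw [← hσu]; ring
      _ ≤ (s ⬝ᵥ s) * (x ⬝ᵥ x) * (y ⬝ᵥ y) := by gcongr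
      _ ≤ (a * σ) * (x ⬝ᵥ x) * (b * σ) := by gcongr
      _ = σ ^ 2 * (k ^ 2 * (x ⬝ᵥ x)) := by rw [hk]; ring
  have hcross : -(u * (y ⬝ᵥ x)) ≤ k * (x ⬝ᵥ x) := by
    suffices (u * (y ⬝ᵥ x)) ^ 2 ≤ (k * (x ⬝ᵥ x)) ^ 2 by
      linarith [(abs_le_of_sq_le_sq' this (by positivity)).1]
    refine le_of_mul_le_mul_left ?_ (by positivity : 0 < σ ^ 2)
    calc σ ^ 2 * (u * (y ⬝ᵥ x)) ^ 2 = (s ⬝ᵥ x) ^ 2 * (y ⬝ᵥ x) ^ 2 := by rw [← hσu]; ring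
      _ ≤ (s ⬝ᵥ s) * (x ⬝ᵥ x) * ((y ⬝ᵥ y) * (x ⬝ᵥ x)) := by gcongr
      _ ≤ (a * σ) * (x ⬝ᵥ x) * ((b * σ) * (x ⬝ᵥ x)) := by gcongr
      _ = σ ^ 2 * (k * (x ⬝ᵥ x)) ^ 2 := by rw [mul_pow, hk]; ring
  simp only [sub_dotProduct, dotProduct_sub, smul_dotProduct, dotProduct_smul, smul_eq_mul,
    dotProduct_comm x y]
  nlinarith

variable [DecidableEq ι]

noncomputable def bfgsUpdate (H : Matrix ι ι ℝ) (s y : ι → ℝ) : Matrix ι ι ℝ :=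
  (1 - (s ⬝ᵥ y)⁻¹ • vecMulVec s y) * H * (1 - (s ⬝ᵥ y)⁻¹ • vecMulVec y s)
    + (s ⬝ᵥ y)⁻¹ • vecMulVec s s

lemma IsHermitian.bfgsUpdate {H : Matrix ι ι ℝ} (hH : H.IsHermitian) (s y : ι → ℝ) :
    (H.bfgsUpdate s y).IsHermitian := by
  simp only [IsHermitian, Matrix.bfgsUpdate, conjTranspose_add, conjTranspose_mul,
    conjTranspose_sub, conjTranspose_one, conjTranspose_smul, conjTranspose_vecMulVec,
    star_trivial, hH.eq, Matrix.mul_assoc]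

lemma dotProduct_bfgsUpdate_mulVec (H : Matrix ι ι ℝ) (s y x : ι → ℝ) :
    x ⬝ᵥ (H.bfgsUpdate s y *ᵥ x) =
      (x - ((s ⬝ᵥ y)⁻¹ * (s ⬝ᵥ x)) • y) ⬝ᵥ (H *ᵥ (x - ((s ⬝ᵥ y)⁻¹ * (s ⬝ᵥ x)) • y))
        + (s ⬝ᵥ y)⁻¹ * (s ⬝ᵥ x) ^ 2 := by
  set z := x - ((s ⬝ᵥ y)⁻¹ * (s ⬝ᵥ x)) • y with hz
  have hright : (1 - (s ⬝ᵥ y)⁻¹ • vecMulVec y s) *ᵥ x = z := by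
    rw [sub_mulVec, one_mulVec, smul_mulVec, vecMulVec_mulVec, op_smul_eq_smul, smul_smul]
  have hleft : x ⬝ᵥ ((1 - (s ⬝ᵥ y)⁻¹ • vecMulVec s y) *ᵥ (H *ᵥ z)) = z ⬝ᵥ (H *ᵥ z) := by
    rw [dotProduct_mulVec, ← mulVec_transpose, transpose_sub, transpose_one, transpose_smul,
      transpose_vecMulVec, sub_mulVec, one_mulVec, smul_mulVec, vecMulVec_mulVec,
      op_smul_eq_smul, smul_smul, hz]
  rw [bfgsUpdate, add_mulVec, dotProduct_add, ← mulVec_mulVec, hright, ← mulVec_mulVec, hleft,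
    smul_mulVec, vecMulVec_mulVec, op_smul_eq_smul, smul_smul, dotProduct_smul,
    dotProduct_comm x s, smul_eq_mul]
  ring

variable {H : Matrix ι ι ℝ} {s y : ι → ℝ}

lemma le_dotProduct_bfgsUpdate_mulVec {d κ : ℝ} (hd : 0 < d) (hsy : 0 < s ⬝ᵥ y)
    (hyy : (y ⬝ᵥ y) / (s ⬝ᵥ y) ≤ κ) (hH : ∀ z, d⁻¹ * (z ⬝ᵥ z) ≤ z ⬝ᵥ (H *ᵥ z)) (x : ι → ℝ) :
    (d + κ)⁻¹ * (x ⬝ᵥ x) ≤ x ⬝ᵥ (H.bfgsUpdate s y *ᵥ x) := by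
  set u := (s ⬝ᵥ y)⁻¹ * (s ⬝ᵥ x)
  set z := x - u • y
  have hκ : 0 ≤ κ := (div_nonneg (dotProduct_self_nonneg y) hsy.le).trans hyy
  have hlast : (s ⬝ᵥ y)⁻¹ * (s ⬝ᵥ x) ^ 2 = (s ⬝ᵥ y) * u ^ 2 := by
    simp only [u]; field_simp
  have hx : x ⬝ᵥ x ≤ (d + κ) * (d⁻¹ * (z ⬝ᵥ z) + (s ⬝ᵥ y) * u ^ 2) := by
    simpa [z] using dotProduct_self_add_smul_le (z := z) (u := u) hsy hd
      ((div_le_iff₀ hsy).mp hyy)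
  rw [dotProduct_bfgsUpdate_mulVec, hlast, inv_mul_le_iff₀ (by positivity)]
  calc x ⬝ᵥ x ≤ (d + κ) * (d⁻¹ * (z ⬝ᵥ z) + (s ⬝ᵥ y) * u ^ 2) := hx
    _ ≤ (d + κ) * (z ⬝ᵥ (H *ᵥ z) + (s ⬝ᵥ y) * u ^ 2) := by gcongr; exact hH z

lemma dotProduct_bfgsUpdate_mulVec_le {a b C : ℝ} (hC : 0 ≤ C) (hsy : 0 < s ⬝ᵥ y)
    (hss : (s ⬝ᵥ s) / (s ⬝ᵥ y) ≤ a) (hyy : (y ⬝ᵥ y) / (s ⬝ᵥ y) ≤ b)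
    (hH : ∀ z, z ⬝ᵥ (H *ᵥ z) ≤ C * (z ⬝ᵥ z)) (x : ι → ℝ) :
    x ⬝ᵥ (H.bfgsUpdate s y *ᵥ x) ≤ ((1 + √(a * b)) ^ 2 * C + a) * (x ⬝ᵥ x) := by
  have hs := (div_le_iff₀ hsy).mp hss
  have hz := dotProduct_self_sub_smul_le (x := x) hsy hs ((div_le_iff₀ hsy).mp hyy)
  have hlast : (s ⬝ᵥ y)⁻¹ * (s ⬝ᵥ x) ^ 2 ≤ a * (x ⬝ᵥ x) := by
    rw [inv_mul_le_iff₀ hsy]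
    calc (s ⬝ᵥ x) ^ 2 ≤ (s ⬝ᵥ s) * (x ⬝ᵥ x) :=
          dotProduct_sq_le_dotProduct_self_mul_dotProduct_self s x
      _ ≤ (a * (s ⬝ᵥ y)) * (x ⬝ᵥ x) := by gcongr; exact dotProduct_self_nonneg x
      _ = (s ⬝ᵥ y) * (a * (x ⬝ᵥ x)) := by ring
  rw [dotProduct_bfgsUpdate_mulVec]
  calc _ ≤ C * ((1 + √(a * b)) ^ 2 * (x ⬝ᵥ x)) + a * (x ⬝ᵥ x) :=
        add_le_add ((hH _).trans (by gcongr)) hlast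
    _ = ((1 + √(a * b)) ^ 2 * C + a) * (x ⬝ᵥ x) := by ring

def IsBFGSSeq (H : ℕ → Matrix ι ι ℝ) (s y : ℕ → ι → ℝ) (p : ℕ) : Prop :=
  ∀ i, 1 ≤ i → i ≤ p → H i = (H (i - 1)).bfgsUpdate (s i) (y i)

namespace IsBFGSSeq

variable {H : ℕ → Matrix ι ι ℝ} {s y : ℕ → ι → ℝ} {p : ℕ}

lemma succ (hH : IsBFGSSeq H s y p) {i : ℕ} (hi : i < p) :
    H (i + 1) = (H i).bfgsUpdate (s (i + 1)) (y (i + 1)) :=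
  hH (i + 1) i.succ_pos hi

lemma isHermitian (hH : IsBFGSSeq H s y p) (h0 : (H 0).IsHermitian) {i : ℕ} (hi : i ≤ p) :
    (H i).IsHermitian := by
  induction i with
  | zero => exact h0
  | succ i ih => rw [hH.succ hi]; exact (ih (by omega)).bfgsUpdate _ _

lemma le_dotProduct_mulVec (hH : IsBFGSSeq H s y p) {d κ : ℝ} (hd : 0 < d)
    (hsy : ∀ i, 1 ≤ i → i ≤ p → 0 < s i ⬝ᵥ y i)
    (hyy : ∀ i, 1 ≤ i → i ≤ p → (y i ⬝ᵥ y i) / (s i ⬝ᵥ y i) ≤ κ)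
    (h0 : ∀ x, d⁻¹ * (x ⬝ᵥ x) ≤ x ⬝ᵥ (H 0 *ᵥ x)) {i : ℕ} (hi : i ≤ p) (x : ι → ℝ) :
    (d + i * κ)⁻¹ * (x ⬝ᵥ x) ≤ x ⬝ᵥ (H i *ᵥ x) := by
  induction i generalizing x with
  | zero => simpa using h0 x
  | succ i ih =>
    have hsy' := hsy (i + 1) i.succ_pos hi
    have hyy' := hyy (i + 1) i.succ_pos hi
    have hκ : 0 ≤ κ := (div_nonneg (dotProduct_self_nonneg _) hsy'.le).trans hyy'
    rw [hH.succ hi, Nat.cast_succ, add_one_mul, ← add_assoc]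
    exact le_dotProduct_bfgsUpdate_mulVec (by positivity) hsy' hyy' (ih (by omega)) x

lemma dotProduct_mulVec_le (hH : IsBFGSSeq H s y p) {C a b : ℝ} (hC : 0 ≤ C)
    (hsy : ∀ i, 1 ≤ i → i ≤ p → 0 < s i ⬝ᵥ y i)
    (hss : ∀ i, 1 ≤ i → i ≤ p → (s i ⬝ᵥ s i) / (s i ⬝ᵥ y i) ≤ a)
    (hyy : ∀ i, 1 ≤ i → i ≤ p → (y i ⬝ᵥ y i) / (s i ⬝ᵥ y i) ≤ b)
    (h0 : ∀ x, x ⬝ᵥ (H 0 *ᵥ x) ≤ C * (x ⬝ᵥ x)) {i : ℕ} (hi : i ≤ p) (x : ι → ℝ) :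
    x ⬝ᵥ (H i *ᵥ x) ≤ (C * ((1 + √(a * b)) ^ 2) ^ i
      + (∑ j ∈ Finset.range i, ((1 + √(a * b)) ^ 2) ^ j) * a) * (x ⬝ᵥ x) := by
  induction i generalizing x with
  | zero => simpa using h0 x
  | succ i ih =>
    have hsy' := hsy (i + 1) i.succ_pos hi
    have hss' := hss (i + 1) i.succ_pos hi
    have ha : 0 ≤ a := (div_nonneg (dotProduct_self_nonneg _) hsy'.le).trans hss'
    rw [hH.succ hi]
    refine (dotProduct_bfgsUpdate_mulVec_le (by positivity) hsy' hss' (hyy (i + 1) i.succ_pos hi)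
      (ih (by omega)) x).trans_eq ?_
    rw [pow_succ, geom_sum_succ]
    ring

end IsBFGSSeq

lemma IsHermitian.posSemidef_sub_smul_one {A : Matrix ι ι ℝ} (hA : A.IsHermitian) {c : ℝ}
    (h : ∀ x, c * (x ⬝ᵥ x) ≤ x ⬝ᵥ (A *ᵥ x)) : (A - c • 1).PosSemidef := by
  refine .of_dotProduct_mulVec_nonneg (hA.sub (isHermitian_one.smul (.all _))) fun x => ?_
  rw [star_trivial, sub_mulVec, dotProduct_sub, smul_mulVec, one_mulVec, dotProduct_smul,
    smul_eq_mul, sub_nonneg]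
  exact h x

lemma IsHermitian.posSemidef_smul_one_sub {A : Matrix ι ι ℝ} (hA : A.IsHermitian) {c : ℝ}
    (h : ∀ x, x ⬝ᵥ (A *ᵥ x) ≤ c * (x ⬝ᵥ x)) : (c • 1 - A).PosSemidef := by
  refine .of_dotProduct_mulVec_nonneg ((isHermitian_one.smul (.all _)).sub hA) fun x => ?_
  rw [star_trivial, sub_mulVec, dotProduct_sub, smul_mulVec, one_mulVec, dotProduct_smul,
    smul_eq_mul, sub_nonneg]
  exact h x

end Matrix

/-- Lemma 5: the L-BFGS matrix H_p built from damped pairs is positive definite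
and bounded: (λ + p/μ₃)⁻¹ I ⪯ H_p ⪯ (λ⁻¹ μ̂^p + ((μ̂^p−1)/(μ̂−1))/μ₂) I,
where μ̂ = (1 + 1/√(μ₂μ₃))². -/
theorem lbfgs_matrix_bounds {n p : ℕ} (lam μ₂ μ₃ : ℝ)
    (hlam : 0 < lam) (hμ₂ : 0 < μ₂) (hμ₃ : 0 < μ₃)
    (s y : ℕ → (Fin n → ℝ)) (H : ℕ → Matrix (Fin n) (Fin n) ℝ)
    (hsy : ∀ i, 1 ≤ i → i ≤ p → 0 < s i ⬝ᵥ y i)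
    (hss : ∀ i, 1 ≤ i → i ≤ p → (s i ⬝ᵥ s i) / (s i ⬝ᵥ y i) ≤ 1 / μ₂)
    (hyy : ∀ i, 1 ≤ i → i ≤ p → (y i ⬝ᵥ y i) / (s i ⬝ᵥ y i) ≤ 1 / μ₃)
    (hH0 : H 0 = lam⁻¹ • (1 : Matrix (Fin n) (Fin n) ℝ))
    (hHrec : ∀ i, 1 ≤ i → i ≤ p →
      H i = (1 - (s i ⬝ᵥ y i)⁻¹ • vecMulVec (s i) (y i)) * H (i - 1)
              * (1 - (s i ⬝ᵥ y i)⁻¹ • vecMulVec (y i) (s i))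
            + (s i ⬝ᵥ y i)⁻¹ • vecMulVec (s i) (s i)) :
    (H p).PosDef ∧
      (H p - ((lam + p / μ₃)⁻¹ : ℝ) • (1 : Matrix (Fin n) (Fin n) ℝ)).PosSemidef ∧
      (((lam⁻¹ * ((1 + 1 / Real.sqrt (μ₂ * μ₃)) ^ 2) ^ p
          + (((1 + 1 / Real.sqrt (μ₂ * μ₃)) ^ 2) ^ p - 1)
              / ((1 + 1 / Real.sqrt (μ₂ * μ₃)) ^ 2 - 1) * (1 / μ₂)) : ℝ)
          • (1 : Matrix (Fin n) (Fin n) ℝ) - H p).PosSemidef := by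
  have hH : IsBFGSSeq H s y p := hHrec
  have hH0x : ∀ x, x ⬝ᵥ (H 0 *ᵥ x) = lam⁻¹ * (x ⬝ᵥ x) := fun x => by
    rw [hH0, smul_mulVec, one_mulVec, dotProduct_smul, smul_eq_mul]
  have herm := hH.isHermitian (by rw [hH0]; exact isHermitian_one.smul (.all _)) le_rfl
  have hlower := hH.le_dotProduct_mulVec hlam hsy hyy (fun x => (hH0x x).ge) le_rfl
  have hupper := hH.dotProduct_mulVec_le (by positivity) hsy hss hyy (fun x => (hH0x x).le) le_rfl
  rw [mul_one_div] at hlower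
  have hsqrt : √(1 / μ₂ * (1 / μ₃)) = 1 / √(μ₂ * μ₃) := by
    rw [one_div_mul_one_div, one_div, Real.sqrt_inv, one_div]
  rw [hsqrt] at hupper
  have hμhat : (1 + 1 / √(μ₂ * μ₃)) ^ 2 ≠ 1 := by
    have : 0 < 1 / √(μ₂ * μ₃) := by positivity
    nlinarith
  have hlow := herm.posSemidef_sub_smul_one hlower
  refine ⟨?_, hlow, ?_⟩
  · simpa using (PosDef.one.smul (by positivity : 0 < (lam + p / μ₃)⁻¹)).add_posSemidef hlow
  · rw [← geom_sum_eq hμhat]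
    exact herm.posSemidef_smul_one_sub hupper
end

section
/- With the same setup as for the gradient (h_{i,t} = Σ_{j,δ} w_{i,j,δ} a_{j,t+δ} + b_i, f a twice-differentiable function of the outputs {h_t}), the Hessian of f with respect to vec(W) satisfies ∂²f/∂vec(W)² = Σ_{t,t'∈𝒯} A_{t,t'} ⊗ G_{t,t'}, where A_{t,t'} = a_t a_{t'}ᵀ ∈ ℝ^{(J|Δ|+1)×(J|Δ|+1)} and G_{t,t'} = ∂²f/(∂h_t ∂h_{t'}) ∈ ℝ^{I×I}. -/
/-!
The Hessian Σ_{t,t'} A_{t,t'} ⊗ G_{t,t'} is stated as the bilinear form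
`(V, V') ↦ Σ_{t,t',i,i'} (G_{t,t'})_{i,i'} (a_tᵀ V_i) (a_{t'}ᵀ V'_{i'})`.

The layer output is a continuous linear map `L` of the weights, so `F = f ∘ L` and
`d²F(W)[V, V'] = d²f(L W)[L V, L V']`. Expanding this bilinear form in the standard basis
of `ℝ^{I × T}` gives the double sum over `(i, t)` and `(i', t')`, with `(L V)(i, t) = a_tᵀ V_i`.
-/

section SecondDerivative

variable {𝕜 : Type*} [NontriviallyNormedField 𝕜]
  {E F G : Type*} [NormedAddCommGroup E] [NormedSpace 𝕜 E] [NormedAddCommGroup F]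
  [NormedSpace 𝕜 F] [NormedAddCommGroup G] [NormedSpace 𝕜 G]

theorem fderiv_clm_apply_const {c : E → F →L[𝕜] G} {x : E} (hc : DifferentiableAt 𝕜 c x)
    (u : F) (v : E) : fderiv 𝕜 (fun y => c y u) x v = fderiv 𝕜 c x v u := by
  simp [fderiv_clm_apply hc (differentiableAt_const u)]

theorem fderiv_fderiv_comp_clm_apply {f : F → G} (hf : Differentiable 𝕜 f)
    {L : E →L[𝕜] F} {w : E} (hf' : DifferentiableAt 𝕜 (fderiv 𝕜 f) (L w)) (v v' : E) :
    fderiv 𝕜 (fun w => fderiv 𝕜 (f ∘ L) w v) w v' =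
      fderiv 𝕜 (fderiv 𝕜 f) (L w) (L v') (L v) := by
  have hgrad : (fun w => fderiv 𝕜 (f ∘ L) w v) = (fun z => fderiv 𝕜 f z (L v)) ∘ L := by
    funext w
    simp [fderiv_comp w (hf (L w)) L.differentiableAt]
  rw [hgrad, fderiv_comp w (hf'.clm_apply (differentiableAt_const _)) L.differentiableAt,
    ContinuousLinearMap.fderiv]
  exact fderiv_clm_apply_const hf' _ _

end SecondDerivative

theorem ContinuousLinearMap.apply_apply_eq_sum_single {R M ι κ : Type*}
    [NontriviallyNormedField R] [NormedAddCommGroup M] [NormedSpace R M]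
    [Fintype ι] [Fintype κ] [DecidableEq ι] [DecidableEq κ]
    (B : (ι → R) →L[R] (κ → R) →L[R] M) (u : ι → R) (v : κ → R) :
    B u v = ∑ i, ∑ j, (u i * v j) • B (Pi.single i 1) (Pi.single j 1) := by
  conv_lhs => rw [pi_eq_sum_univ' u, pi_eq_sum_univ' v]
  simp only [map_sum, map_smul, _root_.sum_apply, smul_apply, smul_smul, Finset.smul_sum]
  rw [Finset.sum_comm]
  exact Finset.sum_congr rfl fun i _ => Finset.sum_congr rfl fun j _ => by rw [mul_comm]

def convLayerMap {𝕜 : Type*} [NontriviallyNormedField 𝕜] {ι T P : Type*} [Fintype P]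
    (a : T → P → 𝕜) : (ι → P → 𝕜) →L[𝕜] (ι × T → 𝕜) where
  toFun W q := ∑ p, W q.1 p * a q.2 p
  map_add' W W' := by
    funext q
    simp only [Pi.add_apply, add_mul, Finset.sum_add_distrib]
  map_smul' c W := by
    funext q
    simp only [Pi.smul_apply, smul_eq_mul, mul_assoc, Finset.mul_sum, RingHom.id_apply]
  cont := by fun_prop

theorem coe_convLayerMap {𝕜 : Type*} [NontriviallyNormedField 𝕜] {ι T P : Type*} [Fintype P]
    (a : T → P → 𝕜) : ⇑(convLayerMap (ι := ι) a) = fun W q => ∑ p, W q.1 p * a q.2 p :=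
  rfl

theorem conv_layer_hessian_structure_general
    {T Δ : Type*} [Fintype T] [Fintype Δ] [DecidableEq T]
    {I J : ℕ}
    (aVec : T → (Fin J × Δ ⊕ Unit) → ℝ)
    (f : (Fin I × T → ℝ) → ℝ) (hf : ContDiff ℝ 2 f)
    (F : (Fin I → (Fin J × Δ ⊕ Unit) → ℝ) → ℝ)
    (hF : F = fun W => f (fun q => ∑ p, W q.1 p * aVec q.2 p))
    (W : Fin I → (Fin J × Δ ⊕ Unit) → ℝ) :
    ∀ V V' : Fin I → (Fin J × Δ ⊕ Unit) → ℝ,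
      fderiv ℝ (fun W' => fderiv ℝ F W' V) W V'
        = ∑ t : T, ∑ t' : T, ∑ i : Fin I, ∑ i' : Fin I,
            (fderiv ℝ (fun z => fderiv ℝ f z (Pi.single (i, t) (1 : ℝ)))
                (fun q => ∑ p, W q.1 p * aVec q.2 p) (Pi.single (i', t') (1 : ℝ)))
            * (∑ p, V i p * aVec t p) * (∑ p, V' i' p * aVec t' p) := by
  intro V V'
  have hdf : Differentiable ℝ (fderiv ℝ f) :=
    (hf.fderiv_right (by norm_num : (1 : WithTop ℕ∞) + 1 ≤ 2)).differentiable one_ne_zero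
  have hF' : F = f ∘ convLayerMap aVec := hF
  rw [hF', fderiv_fderiv_comp_clm_apply (hf.differentiable (by norm_num)) (hdf _),
    ContinuousLinearMap.apply_apply_eq_sum_single, coe_convLayerMap]
  simp only [fun x u => fderiv_clm_apply_const (hdf x) u]
  rw [Finset.sum_comm]
  simp only [Fintype.sum_prod_type_right]
  refine Finset.sum_congr rfl fun t _ => ?_
  rw [Finset.sum_comm]
  refine Finset.sum_congr rfl fun t' _ => Finset.sum_congr rfl fun i _ =>
    Finset.sum_congr rfl fun i' _ => ?_
  rw [smul_eq_mul]
  ring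

/-- Theorem 1(ii): for a convolutional layer h_{i,t} = Σ_{j,δ} w_{i,j,δ} a_{j,t+δ} + b_i,
the Hessian of the loss w.r.t. vec(W) is Σ_{t,t'} A_{t,t'} ⊗ G_{t,t'} with
A_{t,t'} = a_t a_{t'}ᵀ and G_{t,t'} = ∂²f/(∂h_t ∂h_{t'}), stated here as a
bilinear form: d²F(W)[V,V'] = Σ_{t,t'} Σ_{i,i'} (G_{t,t'})_{i,i'} (a_tᵀV_i)(a_{t'}ᵀV'_{i'}). -/
theorem conv_layer_hessian_structure
    {T S Δ : Type*} [Fintype T] [Fintype Δ] [DecidableEq T]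
    {I J : ℕ} (shift : T → Δ → S) (a : Fin J → S → ℝ)
    (aVec : T → (Fin J × Δ ⊕ Unit) → ℝ)
    (haVec : aVec = fun t => Sum.elim (fun jδ => a jδ.1 (shift t jδ.2)) (fun _ => (1 : ℝ)))
    (f : (Fin I × T → ℝ) → ℝ) (hf : ContDiff ℝ 2 f)
    (F : (Fin I → (Fin J × Δ ⊕ Unit) → ℝ) → ℝ)
    (hF : F = fun W => f (fun q => ∑ p, W q.1 p * aVec q.2 p))
    (W : Fin I → (Fin J × Δ ⊕ Unit) → ℝ) :
    ∀ V V' : Fin I → (Fin J × Δ ⊕ Unit) → ℝ,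
      fderiv ℝ (fun W' => fderiv ℝ F W' V) W V'
        = ∑ t : T, ∑ t' : T, ∑ i : Fin I, ∑ i' : Fin I,
            (fderiv ℝ (fun z => fderiv ℝ f z (Pi.single (i, t) (1 : ℝ)))
                (fun q => ∑ p, W q.1 p * aVec q.2 p) (Pi.single (i', t') (1 : ℝ)))
            * (∑ p, V i p * aVec t p) * (∑ p, V' i' p * aVec t' p) :=
  conv_layer_hessian_structure_general aVec f hf F hF W
end

section
/- Let s̃, y ∈ ℝⁿ with s̃ᵀy ≥ (μ₁/μ₂)‖y‖² for μ₁, μ₂ > 0, and set ỹ = y + μ₂ s̃. Then ỹᵀỹ ≤ μ₂ (1/μ₁ + 2) s̃ᵀỹ. -/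
open Matrix

/-- Second inequality of Lemma 3: if s̃ᵀy ≥ (μ₁/μ₂)‖y‖² and ỹ = y + μ₂ s̃,
then ỹᵀỹ ≤ μ₂ (1/μ₁ + 2) s̃ᵀỹ. -/
theorem lm_damping_upper_bound {n : ℕ} (st y : Fin n → ℝ)
    (μ₁ μ₂ : ℝ) (hμ₁ : 0 < μ₁) (hμ₂ : 0 < μ₂)
    (hsy : (μ₁ / μ₂) * (y ⬝ᵥ y) ≤ st ⬝ᵥ y)
    (yt : Fin n → ℝ) (hyt : yt = y + μ₂ • st) :
    yt ⬝ᵥ yt ≤ μ₂ * (1 / μ₁ + 2) * (st ⬝ᵥ yt) := by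
  subst hyt
  have hss : 0 ≤ st ⬝ᵥ st := Finset.sum_nonneg fun i _ => mul_self_nonneg _
  have hyy : 0 ≤ y ⬝ᵥ y := Finset.sum_nonneg fun i _ => mul_self_nonneg _
  have hc : st ⬝ᵥ y = y ⬝ᵥ st := dotProduct_comm st y
  simp only [dotProduct_add, add_dotProduct, dotProduct_smul, smul_dotProduct,
    smul_eq_mul]
  have h1 : y ⬝ᵥ y ≤ (μ₂ / μ₁) * (st ⬝ᵥ y) := by
    rw [div_mul_eq_mul_div, le_div_iff₀ hμ₁]
    calc y ⬝ᵥ y * μ₁ = μ₂ * ((μ₁ / μ₂) * (y ⬝ᵥ y)) := by field_simp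
      _ ≤ μ₂ * (st ⬝ᵥ y) := by nlinarith
  have hsy' : 0 ≤ st ⬝ᵥ y := le_trans (by positivity) hsy
  have key : (μ₂ / μ₁) * (st ⬝ᵥ y) ≤ μ₂ * (1/μ₁ + 2) * (st ⬝ᵥ y + μ₂ * (st ⬝ᵥ st)) - 2 * μ₂ * (st ⬝ᵥ y) - μ₂^2 * (st ⬝ᵥ st) := by
    have h2 : (μ₂ / μ₁) = μ₂ * (1/μ₁) := by ring
    rw [h2]
    nlinarith [mul_nonneg (mul_nonneg (mul_nonneg hμ₂.le (one_div_nonneg.2 hμ₁.le)) hμ₂.le) hss, mul_nonneg (mul_nonneg hμ₂.le hμ₂.le) hss]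
  nlinarith [h1, key, hc]
end
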